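/- arXiv:1804.04444 — 4 statements merged into one kernel-verified Lean document; each statement's English description precedes it below -/
import Mathlib

section
/- Let a : ℝ^d → ℝ^{d×d'} be bounded and Lipschitz with constant C, and let ΔX be an ℝ^{d'}-valued random variable independent of the pair (Y, Y') of ℝ^d-valued random variables, with |𝔼[ΔX]| ≤ C² h and 𝔼[|ΔX|²] ≤ C² h for some h > 0. Then the one-step Euler updates Z = Y + a(Y)ΔX and Z' = Y' + a(Y')ΔX satisfy 𝔼[|Z - Z'|²] ≤ (1 + C₁ h) 𝔼[|Y - Y'|²] for some constant C₁ depending only on C. -/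
/-!
Writing `U = Y - Y'` and `A = a(Y) - a(Y')`, the difference of the two Euler updates is
`U + A ΔX`, so its squared norm is `‖U‖² + 2⟪A^* U, ΔX⟫ + ‖A ΔX‖²`. The vector `A^* U` is a
function of `(Y, Y')` of size at most `C‖U‖²`, hence independent of `ΔX`, and the cross term has
expectation `⟪𝔼[A^* U], 𝔼ΔX⟫ ≤ C 𝔼‖U‖² ‖𝔼ΔX‖`. The last term is at most `C²‖U‖²‖ΔX‖²`, whose
expectation factorizes by independence. Altogether
`𝔼‖Z - Z'‖² ≤ (1 + 2C‖𝔼ΔX‖ + C²𝔼‖ΔX‖²) 𝔼‖U‖²`, and one can take `C₁ = 2C³ + C⁴`.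
-/

open MeasureTheory ProbabilityTheory
open scoped InnerProductSpace
open ContinuousLinearMap (adjoint)

lemma continuous_of_norm_sub_le_mul {E G : Type*} [SeminormedAddCommGroup E]
    [SeminormedAddCommGroup G] {f : E → G} {C : ℝ} (hf : ∀ x y, ‖f x - f y‖ ≤ C * ‖x - y‖) :
    Continuous f :=
  (LipschitzWith.of_dist_le' fun x y => by simpa only [dist_eq_norm] using hf x y).continuous

section NormedSpace

variable {E F : Type*} [NormedAddCommGroup E] [NormedSpace ℝ E]
  [NormedAddCommGroup F] [NormedSpace ℝ F] {a : E → F →L[ℝ] E} {C : ℝ}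

lemma norm_sub_apply_sq_le (hLip : ∀ y y', ‖a y - a y'‖ ≤ C * ‖y - y'‖) (y y' : E) (x : F) :
    ‖(a y - a y') x‖ ^ 2 ≤ C ^ 2 * (‖y - y'‖ ^ 2 * ‖x‖ ^ 2) := calc
  _ ≤ (‖a y - a y'‖ * ‖x‖) ^ 2 := by gcongr; exact ContinuousLinearMap.le_opNorm _ _
  _ ≤ (C * ‖y - y'‖ * ‖x‖) ^ 2 := by gcongr; exact hLip y y'
  _ = C ^ 2 * (‖y - y'‖ ^ 2 * ‖x‖ ^ 2) := by ring

variable [MeasurableSpace E] [BorelSpace E] [SecondCountableTopology E]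
  [MeasurableSpace F] [BorelSpace F] {Ω : Type*} [MeasurableSpace Ω] {μ : Measure Ω}
  {Y Y' : Ω → E} {X : Ω → F}

lemma integrable_and_integral_norm_sub_apply_sq_le
    (hLip : ∀ y y', ‖a y - a y'‖ ≤ C * ‖y - y'‖)
    (hY : MemLp Y 2 μ) (hY' : MemLp Y' 2 μ) (hX : MemLp X 2 μ)
    (hInd : (fun ω => (Y ω, Y' ω)) ⟂ᵢ[μ] X) :
    Integrable (fun ω => ‖(a (Y ω) - a (Y' ω)) (X ω)‖ ^ 2) μ ∧
    ∫ ω, ‖(a (Y ω) - a (Y' ω)) (X ω)‖ ^ 2 ∂μ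
      ≤ C ^ 2 * ((∫ ω, ‖Y ω - Y' ω‖ ^ 2 ∂μ) * ∫ ω, ‖X ω‖ ^ 2 ∂μ) := by
  have ha := continuous_of_norm_sub_le_mul hLip
  have hU2 : Integrable (fun ω => ‖Y ω - Y' ω‖ ^ 2) μ :=
    (hY.sub hY').integrable_norm_pow two_ne_zero
  have hX2 := hX.integrable_norm_pow two_ne_zero
  have hUX : Integrable (fun ω => ‖Y ω - Y' ω‖ ^ 2 * ‖X ω‖ ^ 2) μ :=
    ((hInd.comp (by fun_prop : Measurable fun p : E × E => ‖p.1 - p.2‖ ^ 2)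
      (by fun_prop : Measurable fun x : F => ‖x‖ ^ 2)).integrable_mul hU2 hX2 :)
  have hVc : Continuous fun p : E × E × F => (a p.1 - a p.2.1) p.2.2 := by fun_prop
  have hVle := fun ω => norm_sub_apply_sq_le hLip (Y ω) (Y' ω) (X ω)
  have hV : Integrable (fun ω => ‖(a (Y ω) - a (Y' ω)) (X ω)‖ ^ 2) μ :=
    (hUX.const_mul (C ^ 2)).mono'
      ((hVc.comp_aestronglyMeasurable (hY.1.prodMk (hY'.1.prodMk hX.1)) :).norm.pow 2)
      (ae_of_all _ fun ω => by rw [Real.norm_of_nonneg (by positivity)]; exact hVle ω)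
  refine ⟨hV, (integral_mono hV (hUX.const_mul _) hVle).trans_eq ?_⟩
  rw [integral_const_mul, hInd.integral_fun_comp_mul_comp (f := fun p : E × E => ‖p.1 - p.2‖ ^ 2)
    (g := fun x : F => ‖x‖ ^ 2) (hY.1.prodMk hY'.1).aemeasurable hX.1.aemeasurable
    (by fun_prop) (by fun_prop)]

end NormedSpace

lemma integral_inner_le_of_indepFun {Ω F : Type*} [MeasurableSpace Ω] {μ : Measure Ω}
    [NormedAddCommGroup F] [InnerProductSpace ℝ F] [CompleteSpace F]
    [MeasurableSpace F] [BorelSpace F] {W X : Ω → F} (hWX : W ⟂ᵢ[μ] X)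
    (hW : Integrable W μ) (hX : Integrable X μ) :
    ∫ ω, ⟪W ω, X ω⟫_ℝ ∂μ ≤ ‖∫ ω, W ω ∂μ‖ * ‖∫ ω, X ω ∂μ‖ :=
  (hWX.integral_bilin hW hX (innerSL ℝ)).trans_le (real_inner_le_norm _ _)

section InnerProductSpace

variable {E F : Type*}
  [NormedAddCommGroup E] [InnerProductSpace ℝ E] [CompleteSpace E]
  [NormedAddCommGroup F] [InnerProductSpace ℝ F] [CompleteSpace F]

lemma norm_add_apply_sub_add_apply_sq (A A' : F →L[ℝ] E) (y y' : E) (x : F) :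
    ‖(y + A x) - (y' + A' x)‖ ^ 2
      = ‖y - y'‖ ^ 2 + 2 * ⟪adjoint (A - A') (y - y'), x⟫_ℝ + ‖(A - A') x‖ ^ 2 := by
  rw [ContinuousLinearMap.adjoint_inner_left, ← norm_add_sq_real, sub_apply]
  congr 2
  abel

lemma norm_adjoint_sub_apply_sub_le {a : E → F →L[ℝ] E} {C : ℝ}
    (hLip : ∀ y y', ‖a y - a y'‖ ≤ C * ‖y - y'‖) (y y' : E) :
    ‖adjoint (a y - a y') (y - y')‖ ≤ C * ‖y - y'‖ ^ 2 := calc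
  _ ≤ ‖adjoint (a y - a y')‖ * ‖y - y'‖ := ContinuousLinearMap.le_opNorm _ _
  _ = ‖a y - a y'‖ * ‖y - y'‖ := by rw [LinearIsometryEquiv.norm_map]
  _ ≤ C * ‖y - y'‖ * ‖y - y'‖ := by gcongr; exact hLip y y'
  _ = C * ‖y - y'‖ ^ 2 := by ring

variable [MeasurableSpace E] [BorelSpace E] [SecondCountableTopology E]
  [MeasurableSpace F] [BorelSpace F]
  {Ω : Type*} [MeasurableSpace Ω] {μ : Measure Ω} [IsFiniteMeasure μ]
  {Y Y' : Ω → E} {X : Ω → F} {a : E → F →L[ℝ] E} {C : ℝ}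

lemma integrable_and_integral_inner_adjoint_sub_apply_sub_le
    (hLip : ∀ y y', ‖a y - a y'‖ ≤ C * ‖y - y'‖)
    (hY : MemLp Y 2 μ) (hY' : MemLp Y' 2 μ) (hX : MemLp X 2 μ)
    (hInd : (fun ω => (Y ω, Y' ω)) ⟂ᵢ[μ] X) :
    Integrable (fun ω => ⟪adjoint (a (Y ω) - a (Y' ω)) (Y ω - Y' ω), X ω⟫_ℝ) μ ∧
    ∫ ω, ⟪adjoint (a (Y ω) - a (Y' ω)) (Y ω - Y' ω), X ω⟫_ℝ ∂μ
      ≤ C * (∫ ω, ‖Y ω - Y' ω‖ ^ 2 ∂μ) * ‖∫ ω, X ω ∂μ‖ := by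
  have ha := continuous_of_norm_sub_le_mul hLip
  have hWc : Continuous fun p : E × E => adjoint (a p.1 - a p.2) (p.1 - p.2) := by fun_prop
  have hWX := hInd.comp hWc.measurable measurable_id
  have hU2 : Integrable (fun ω => ‖Y ω - Y' ω‖ ^ 2) μ :=
    (hY.sub hY').integrable_norm_pow two_ne_zero
  have hWle := fun ω => norm_adjoint_sub_apply_sub_le hLip (Y ω) (Y' ω)
  have hW : Integrable (fun ω => adjoint (a (Y ω) - a (Y' ω)) (Y ω - Y' ω)) μ :=
    (hU2.const_mul C).mono' (hWc.comp_aestronglyMeasurable (hY.1.prodMk hY'.1) :)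
      (ae_of_all _ hWle)
  have hX1 := hX.integrable one_le_two
  refine ⟨hWX.integrable_bilin hW hX1 (innerSL ℝ), ?_⟩
  refine (integral_inner_le_of_indepFun hWX hW hX1).trans
    (mul_le_mul_of_nonneg_right ?_ (norm_nonneg _))
  calc _ ≤ ∫ ω, ‖adjoint (a (Y ω) - a (Y' ω)) (Y ω - Y' ω)‖ ∂μ := norm_integral_le_integral_norm _
    _ ≤ ∫ ω, C * ‖Y ω - Y' ω‖ ^ 2 ∂μ := integral_mono hW.norm (hU2.const_mul C) hWle
    _ = C * ∫ ω, ‖Y ω - Y' ω‖ ^ 2 ∂μ := integral_const_mul _ _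

theorem integral_norm_euler_step_sub_sq_le (hLip : ∀ y y', ‖a y - a y'‖ ≤ C * ‖y - y'‖)
    (hY : MemLp Y 2 μ) (hY' : MemLp Y' 2 μ) (hX : MemLp X 2 μ)
    (hInd : (fun ω => (Y ω, Y' ω)) ⟂ᵢ[μ] X) :
    ∫ ω, ‖(Y ω + a (Y ω) (X ω)) - (Y' ω + a (Y' ω) (X ω))‖ ^ 2 ∂μ
      ≤ (1 + 2 * C * ‖∫ ω, X ω ∂μ‖ + C ^ 2 * ∫ ω, ‖X ω‖ ^ 2 ∂μ)
        * ∫ ω, ‖Y ω - Y' ω‖ ^ 2 ∂μ := by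
  obtain ⟨hcross_int, hcross⟩ :=
    integrable_and_integral_inner_adjoint_sub_apply_sub_le hLip hY hY' hX hInd
  obtain ⟨hquad_int, hquad⟩ := integrable_and_integral_norm_sub_apply_sq_le hLip hY hY' hX hInd
  have hU2 : Integrable (fun ω => ‖Y ω - Y' ω‖ ^ 2) μ :=
    (hY.sub hY').integrable_norm_pow two_ne_zero
  rw [integral_congr_ae (ae_of_all _ fun ω => norm_add_apply_sub_add_apply_sq _ _ _ _ _),
    integral_add (hU2.fun_add (hcross_int.const_mul 2)) hquad_int,
    integral_add hU2 (hcross_int.const_mul 2), integral_const_mul]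
  linarith

end InnerProductSpace

/-- One-step Euler contraction: if `a` is bounded Lipschitz with constant `C`, and
`ΔX` is independent of `(Y,Y')` with `‖𝔼 ΔX‖ ≤ C²h` and `𝔼‖ΔX‖² ≤ C²h`, then
`𝔼‖(Y + a(Y)ΔX) - (Y' + a(Y')ΔX)‖² ≤ (1 + C₁ h) 𝔼‖Y - Y'‖²` for a constant `C₁`
depending only on `C`. -/
theorem stmt4 (C : ℝ) (hC : 0 < C) :
    ∃ C₁ : ℝ, 0 < C₁ ∧
    ∀ (d d' : ℕ) (Ω : Type) [MeasurableSpace Ω] (μ : Measure Ω),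
      IsProbabilityMeasure μ →
    ∀ (Y Y' : Ω → EuclideanSpace ℝ (Fin d)) (ΔX : Ω → EuclideanSpace ℝ (Fin d'))
      (a : EuclideanSpace ℝ (Fin d) → (EuclideanSpace ℝ (Fin d') →L[ℝ] EuclideanSpace ℝ (Fin d)))
      (h : ℝ), 0 < h →
      (∀ y y', ‖a y - a y'‖ ≤ C * ‖y - y'‖) →
      (∀ y, ‖a y‖ ≤ C) →
      Measurable Y → Measurable Y' → Measurable ΔX →
      MemLp Y 2 μ → MemLp Y' 2 μ → MemLp ΔX 2 μ →
      IndepFun (fun ω => (Y ω, Y' ω)) ΔX μ →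
      ‖∫ ω, ΔX ω ∂μ‖ ≤ C ^ 2 * h →
      (∫ ω, ‖ΔX ω‖ ^ 2 ∂μ) ≤ C ^ 2 * h →
      (∫ ω, ‖(Y ω + a (Y ω) (ΔX ω)) - (Y' ω + a (Y' ω) (ΔX ω))‖ ^ 2 ∂μ)
        ≤ (1 + C₁ * h) * ∫ ω, ‖Y ω - Y' ω‖ ^ 2 ∂μ := by
  refine ⟨2 * C ^ 3 + C ^ 4, by positivity, ?_⟩
  intro d d' Ω _ μ _ Y Y' ΔX a h _ hLip _ _ _ _ hY hY' hX hInd hmean hsq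
  refine (integral_norm_euler_step_sub_sq_le hLip hY hY' hX hInd).trans ?_
  have hI : 0 ≤ ∫ ω, ‖Y ω - Y' ω‖ ^ 2 ∂μ := integral_nonneg fun ω => by positivity
  refine mul_le_mul_of_nonneg_right ?_ hI
  calc 1 + 2 * C * ‖∫ ω, ΔX ω ∂μ‖ + C ^ 2 * ∫ ω, ‖ΔX ω‖ ^ 2 ∂μ
      ≤ 1 + 2 * C * (C ^ 2 * h) + C ^ 2 * (C ^ 2 * h) := by gcongr
    _ = 1 + (2 * C ^ 3 + C ^ 4) * h := by ring
end

section
/- Let Q^l, Q^{l-1} be Markov kernels on ℝ^d with coupling Q̌ such that (a) for each y, ∫|y^l - y^{l-1}|² Q̌((y,y), d(y^l,y^{l-1})) ≤ C₀ h^β, and (b) Q^l has the Lipschitz coupling property: for all y,y' there is a coupling of Q^l(y,·), Q^l(y',·) with second moment of the difference at most C₁²|y-y'|². Then for all y, y', (∫ |y^l - y^{l-1}|² Q̌((y,y'), d(y^l,y^{l-1})))^{1/2} ≤ C (|y - y'| + h^{β/2}) for a constant C depending only on C₀, C₁, where Q̌((y,y'),·) is any coupling of Q^l(y,·) and Q^{l-1}(y',·).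 -/
/-!
Glue a coupling `R₁` of `Q^l(y,·)` and `Q^l(y',·)` (hypothesis (b)) to the diagonal coupling
`R₂ = Q̌((y',y'),·)` of `Q^l(y',·)` and `Q^{l-1}(y',·)` (hypothesis (a)) along their common
marginal `Q^l(y',·)`, by disintegrating `R₂` with respect to its first coordinate. Under the
glued law the middle coordinate plays the role of `ȳ^l`, and Minkowski's inequality in `L²`
bounds the cost of the resulting coupling of `Q^l(y,·)` and `Q^{l-1}(y',·)` by
`C₁ ‖y - y'‖ + √C₀ h^{β/2}`.
-/

open MeasureTheory ProbabilityTheory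
open scoped ENNReal

namespace MeasureTheory.Measure

variable {α β γ : Type*} [MeasurableSpace α] [MeasurableSpace β] [MeasurableSpace γ]

lemma map_compProd_prodMkLeft (μ : Measure (α × β)) [SFinite μ] (κ : Kernel β γ)
    [IsSFiniteKernel κ] :
    (μ ⊗ₘ Kernel.prodMkLeft α κ).map (fun q ↦ (q.1.2, q.2)) = μ.snd ⊗ₘ κ := by
  ext s hs
  have hf : Measurable fun q : (α × β) × γ ↦ (q.1.2, q.2) := by fun_prop
  rw [map_apply hf hs, compProd_apply (hf hs), compProd_apply hs, Measure.snd,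
    lintegral_map (Kernel.measurable_kernel_prodMk_left hs) measurable_snd]
  rfl

variable [StandardBorelSpace γ] [Nonempty γ]

noncomputable def glue (R₁ : Measure (α × β)) (R₂ : Measure (β × γ)) [IsFiniteMeasure R₂] :
    Measure ((α × β) × γ) :=
  R₁ ⊗ₘ Kernel.prodMkLeft α R₂.condKernel

variable {R₁ : Measure (α × β)} {R₂ : Measure (β × γ)} [SFinite R₁] [IsFiniteMeasure R₂]

variable (R₁ R₂) in
lemma fst_glue : (glue R₁ R₂).fst = R₁ := fst_compProd _ _

lemma map_glue (h : R₁.snd = R₂.fst) : (glue R₁ R₂).map (fun q ↦ (q.1.2, q.2)) = R₂ := by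
  rw [glue, map_compProd_prodMkLeft, h, disintegrate]

end MeasureTheory.Measure

section Gluing

open Measure

variable {E : Type*} [NormedAddCommGroup E] [MeasurableSpace E] [BorelSpace E]
  [SecondCountableTopology E] [StandardBorelSpace E] [Nonempty E]

theorem exists_coupling_eLpNorm_sub_le {p : ℝ≥0∞} (hp : 1 ≤ p) {R₁ R₂ : Measure (E × E)}
    [SFinite R₁] [IsFiniteMeasure R₂] (h : R₁.snd = R₂.fst) :
    ∃ R : Measure (E × E), R.fst = R₁.fst ∧ R.snd = R₂.snd ∧
      eLpNorm (fun x ↦ x.1 - x.2) p R ≤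
        eLpNorm (fun x ↦ x.1 - x.2) p R₁ + eLpNorm (fun x ↦ x.1 - x.2) p R₂ := by
  have hR₁ : eLpNorm (fun x ↦ x.1 - x.2) p R₁ =
      eLpNorm (fun q : (E × E) × E ↦ q.1.1 - q.1.2) p (glue R₁ R₂) := by
    conv_lhs => rw [← fst_glue R₁ R₂]
    exact eLpNorm_map_measure (by fun_prop) (by fun_prop)
  have hR₂ : eLpNorm (fun x ↦ x.1 - x.2) p R₂ =
      eLpNorm (fun q : (E × E) × E ↦ q.1.2 - q.2) p (glue R₁ R₂) := by
    conv_lhs => rw [← map_glue h]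
    exact eLpNorm_map_measure (by fun_prop) (by fun_prop)
  refine ⟨(glue R₁ R₂).map fun q ↦ (q.1.1, q.2), ?_, ?_, ?_⟩
  · calc _ = (glue R₁ R₂).fst.fst := by
          rw [Measure.fst, Measure.fst, Measure.fst, map_map measurable_fst (by fun_prop),
            map_map measurable_fst measurable_fst]
          rfl
      _ = R₁.fst := by rw [fst_glue]
  · calc _ = ((glue R₁ R₂).map fun q ↦ (q.1.2, q.2)).snd := by
          rw [Measure.snd, Measure.snd, map_map measurable_snd (by fun_prop),
            map_map measurable_snd (by fun_prop)]
          rfl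
      _ = R₂.snd := by rw [map_glue h]
  · rw [eLpNorm_map_measure (by fun_prop) (by fun_prop), hR₁, hR₂]
    convert eLpNorm_add_le (f := fun q : (E × E) × E ↦ q.1.1 - q.1.2) (g := fun q ↦ q.1.2 - q.2)
      (μ := glue R₁ R₂) (by fun_prop) (by fun_prop) hp using 2
    funext q
    exact (sub_add_sub_cancel _ _ _).symm

end Gluing

lemma lintegral_ofReal_norm_sq {α E : Type*} [MeasurableSpace α] [NormedAddCommGroup E]
    (f : α → E) (μ : Measure α) :
    ∫⁻ x, ENNReal.ofReal (‖f x‖ ^ 2) ∂μ = eLpNorm f 2 μ ^ 2 := by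
  have := eLpNorm_nnreal_pow_eq_lintegral (f := f) (μ := μ) (p := 2) two_ne_zero
  simp only [NNReal.coe_ofNat, ENNReal.coe_ofNat, ENNReal.rpow_two] at this
  simp only [this, ENNReal.ofReal_pow (norm_nonneg _), ofReal_norm]

lemma ENNReal.le_ofReal_of_sq_le {a : ℝ≥0∞} {b : ℝ} (hb : 0 ≤ b)
    (h : a ^ 2 ≤ ENNReal.ofReal (b ^ 2)) : a ≤ ENNReal.ofReal b := by
  rwa [ENNReal.ofReal_pow hb, ENNReal.pow_le_pow_left_iff two_ne_zero] at h

/-- Strong coupling error with different starting points: if (a) the diagonal coupling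
`Q̌((y,y),·)` of `Q^l, Q^{l-1}` has second moment `≤ C₀ h^β`, and (b) `Q^l` has the
Lipschitz coupling property with constant `C₁`, then for all `y, y'` there is a coupling
of `Q^l(y,·)` and `Q^{l-1}(y',·)` with
`(∫ ‖y^l - y^{l-1}‖²)^{1/2} ≤ C (‖y-y'‖ + h^{β/2})`, `C` depending only on `C₀, C₁`. -/
theorem stmt8 (d : ℕ) (C₀ C₁ : ℝ) (hC₀ : 0 < C₀) (hC₁ : 0 < C₁) :
    ∃ C : ℝ, 0 < C ∧
    ∀ (Ql Qlm : Kernel (EuclideanSpace ℝ (Fin d)) (EuclideanSpace ℝ (Fin d))),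
      IsMarkovKernel Ql → IsMarkovKernel Qlm →
    ∀ (Qc : Kernel (EuclideanSpace ℝ (Fin d) × EuclideanSpace ℝ (Fin d))
          (EuclideanSpace ℝ (Fin d) × EuclideanSpace ℝ (Fin d))),
      IsMarkovKernel Qc →
      (∀ y, (Qc (y, y)).map Prod.fst = Ql y) →
      (∀ y, (Qc (y, y)).map Prod.snd = Qlm y) →
    ∀ (h β : ℝ), 0 < h → 0 < β →
      (∀ y, (∫⁻ p, ENNReal.ofReal (‖p.1 - p.2‖ ^ 2) ∂(Qc (y, y)))
          ≤ ENNReal.ofReal (C₀ * h ^ β)) →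
      (∀ y y', ∃ R : Measure (EuclideanSpace ℝ (Fin d) × EuclideanSpace ℝ (Fin d)),
          IsProbabilityMeasure R ∧
          R.map Prod.fst = Ql y ∧ R.map Prod.snd = Ql y' ∧
          (∫⁻ p, ENNReal.ofReal (‖p.1 - p.2‖ ^ 2) ∂(R))
            ≤ ENNReal.ofReal (C₁ ^ 2 * ‖y - y'‖ ^ 2)) →
    ∀ y y', ∃ R : Measure (EuclideanSpace ℝ (Fin d) × EuclideanSpace ℝ (Fin d)),
      IsProbabilityMeasure R ∧
      R.map Prod.fst = Ql y ∧ R.map Prod.snd = Qlm y' ∧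
      (∫⁻ p, ENNReal.ofReal (‖p.1 - p.2‖ ^ 2) ∂(R)) ^ ((1:ℝ) / 2)
        ≤ ENNReal.ofReal (C * (‖y - y'‖ + h ^ (β / 2))) := by
  refine ⟨C₁ + √C₀, by positivity, fun Ql _ _ _ Qc _ hfst hsnd h β hh _ ha hb y y' ↦ ?_⟩
  obtain ⟨R₁, _, hR₁fst, hR₁snd, hR₁⟩ := hb y y'
  obtain ⟨R, hRfst, hRsnd, hR⟩ :=
    exists_coupling_eLpNorm_sub_le one_le_two (R₂ := Qc (y', y')) (hR₁snd.trans (hfst y').symm)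
  simp only [lintegral_ofReal_norm_sq] at ha hR₁ ⊢
  have hE₁ : eLpNorm (fun p ↦ p.1 - p.2) 2 R₁ ≤ ENNReal.ofReal (C₁ * ‖y - y'‖) :=
    ENNReal.le_ofReal_of_sq_le (by positivity) (by rwa [mul_pow])
  have hE₂ : eLpNorm (fun p ↦ p.1 - p.2) 2 (Qc (y', y')) ≤ ENNReal.ofReal (√C₀ * h ^ (β / 2)) :=
    ENNReal.le_ofReal_of_sq_le (by positivity) (by
      rw [mul_pow, Real.sq_sqrt hC₀.le, ← Real.rpow_mul_natCast hh.le, Nat.cast_ofNat,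
        div_mul_cancel₀ β two_ne_zero]
      exact ha y')
  refine ⟨R, ⟨by rw [← Measure.fst_univ, hRfst, Measure.fst_univ, measure_univ]⟩,
    hRfst.trans hR₁fst, hRsnd.trans (hsnd y'), ?_⟩
  rw [← ENNReal.rpow_two, ← ENNReal.rpow_mul, mul_one_div_cancel two_ne_zero, ENNReal.rpow_one]
  calc _ ≤ _ := hR.trans (add_le_add hE₁ hE₂)
    _ ≤ _ := by
      rw [← ENNReal.ofReal_add (by positivity) (by positivity)]
      gcongr
      nlinarith [norm_nonneg (y - y'), Real.sqrt_nonneg C₀, Real.rpow_nonneg hh.le (β / 2)]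
end

section
/- (Multilevel variance-cost optimization, case β > γ.) Suppose for levels l = 0,…,L the per-sample variance is V_l = c_V h_l^β and per-sample cost is C_l = c_C h_l^{-γ} with h_l = 2^{-l}, β > γ > 0. With sample sizes N_l = ⌈ε^{-2} h_l^{(β+γ)/2} K⌉ where K = Σ_{l=0}^L h_l^{(β-γ)/2}, the total variance Σ_l V_l / N_l is O(ε²) and the total cost Σ_l C_l N_l is O(ε^{-2}), with constants independent of L. -/
open Finset

/-- MLMC variance/cost optimization in the case `β > γ`: with `V_l = c_V h_l^β`,
`C_l = c_C h_l^{-γ}`, `h_l = 2^{-l}`, `N_l = ⌈ε^{-2} h_l^{(β+γ)/2} K⌉`,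
`K = Σ_{l≤L} h_l^{(β-γ)/2}`, the total variance is `O(ε²)` and the total cost is
`O(ε^{-2})`, with constants independent of `L` (and of `ε`). -/
theorem stmt10 (β γ cV cC : ℝ) (hγ : 0 < γ) (hβγ : γ < β) (hcV : 0 < cV) (hcC : 0 < cC) :
    ∃ c₁ c₂ : ℝ, 0 < c₁ ∧ 0 < c₂ ∧
    ∀ (ε : ℝ) (L : ℕ), 0 < ε → ε ≤ 1 →
      (2:ℝ) ^ ((L:ℝ) * γ) ≤ ε ^ (-2 : ℝ) →
      ∀ (V Cc : ℕ → ℝ) (N : ℕ → ℕ) (K : ℝ),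
      (∀ l, V l = cV * ((2:ℝ) ^ (-(l:ℝ))) ^ β) →
      (∀ l, Cc l = cC * ((2:ℝ) ^ (-(l:ℝ))) ^ (-γ)) →
      K = ∑ l ∈ Finset.range (L+1), ((2:ℝ) ^ (-(l:ℝ))) ^ ((β - γ) / 2) →
      (∀ l, N l = ⌈ε ^ (-2:ℝ) * ((2:ℝ) ^ (-(l:ℝ))) ^ ((β + γ) / 2) * K⌉₊) →
      (∑ l ∈ Finset.range (L+1), V l / (N l : ℝ)) ≤ c₁ * ε ^ 2 ∧
      (∑ l ∈ Finset.range (L+1), Cc l * (N l : ℝ)) ≤ c₂ * ε ^ (-2:ℝ) := by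
  have h2 : (0:ℝ) < 2 := two_pos
  set d : ℝ := (β - γ) / 2 with hd
  have hd0 : 0 < d := by rw [hd]; linarith
  set r : ℝ := (2:ℝ) ^ (-d) with hr
  have hr0 : 0 < r := Real.rpow_pos_of_pos h2 _
  have hr1 : r < 1 := Real.rpow_lt_one_of_one_lt_of_neg one_lt_two (by linarith)
  set t : ℝ := (2:ℝ) ^ γ with ht
  have ht1 : 1 < t := by
    rw [ht]; exact Real.one_lt_rpow_iff_of_pos h2 |>.mpr (Or.inl ⟨one_lt_two, hγ⟩)
  have ht0 : 0 < t - 1 := by linarith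
  set M : ℝ := (1 - r)⁻¹ with hM
  have hM0 : 0 < M := by rw [hM]; exact inv_pos.mpr (by linarith)
  refine ⟨cV, cC * M ^ 2 + cC * t / (t - 1), hcV,
    add_pos (by positivity) (div_pos (by positivity) ht0), ?_⟩
  intro ε L hε hε1 hεL V Cc N K hV hC hK hN
  have hs : ∀ l : ℕ, (0:ℝ) < (2:ℝ) ^ (-(l:ℝ)) := fun l => Real.rpow_pos_of_pos h2 _
  have pow2 : ∀ (l : ℕ) (a : ℝ), ((2:ℝ) ^ (-(l:ℝ))) ^ a = ((2:ℝ) ^ (-a)) ^ l := by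
    intro l a
    rw [← Real.rpow_natCast ((2:ℝ) ^ (-a)) l, ← Real.rpow_mul h2.le, ← Real.rpow_mul h2.le]
    ring_nf
  have hrl : ∀ l : ℕ, ((2:ℝ) ^ (-(l:ℝ))) ^ d = r ^ l := fun l => pow2 l d
  have htl : ∀ l : ℕ, ((2:ℝ) ^ (-(l:ℝ))) ^ (-γ) = t ^ l := by
    intro l; rw [pow2 l (-γ), neg_neg]
  have hK' : K = ∑ l ∈ range (L+1), r ^ l := by
    rw [hK]; exact sum_congr rfl fun l _ => hrl l
  have hK1 : 1 ≤ K := by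
    rw [hK']
    have h0 : (0:ℕ) ∈ range (L+1) := mem_range.mpr (Nat.succ_pos L)
    have := Finset.single_le_sum (f := fun l => r ^ l)
      (fun i _ => (pow_pos hr0 i).le) h0
    simpa using this
  have hK0 : 0 < K := lt_of_lt_of_le one_pos hK1
  have hKM : K ≤ M := by
    rw [hK', hM]
    calc ∑ l ∈ range (L+1), r ^ l ≤ ∑' l : ℕ, r ^ l :=
          Summable.sum_le_tsum _ (fun i _ => (pow_pos hr0 i).le)
            (summable_geometric_of_lt_one hr0.le hr1)
      _ = (1 - r)⁻¹ := tsum_geometric_of_lt_one hr0.le hr1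
  have hε2 : ε ^ (-2:ℝ) = (ε ^ 2)⁻¹ := by
    rw [show (-2:ℝ) = -((2:ℕ):ℝ) by norm_num, Real.rpow_neg hε.le, Real.rpow_natCast]
  have hεinv : (0:ℝ) < ε ^ (-2:ℝ) := Real.rpow_pos_of_pos hε _
  -- A l > 0 and N l ≥ A l
  set A : ℕ → ℝ := fun l => ε ^ (-2:ℝ) * ((2:ℝ) ^ (-(l:ℝ))) ^ ((β + γ) / 2) * K with hA
  have hA0 : ∀ l, 0 < A l := fun l => by
    have := hs l; have := Real.rpow_pos_of_pos (hs l) ((β + γ)/2); positivity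
  have hNA : ∀ l, A l ≤ (N l : ℝ) := fun l => by rw [hN l]; exact Nat.le_ceil _
  have hNA1 : ∀ l, (N l : ℝ) ≤ A l + 1 := fun l => by
    rw [hN l]; exact (Nat.ceil_lt_add_one (hA0 l).le).le
  constructor
  · -- variance
    have hterm : ∀ l ∈ range (L+1), V l / (N l : ℝ) ≤ cV * ε ^ 2 / K * r ^ l := by
      intro l _
      have hVl : 0 ≤ V l := by
        rw [hV l]; have := Real.rpow_pos_of_pos (hs l) β; positivity
      have step1 : V l / (N l : ℝ) ≤ V l / A l :=
        div_le_div_of_nonneg_left hVl (hA0 l) (hNA l)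
      have step2 : V l / A l = cV * ε ^ 2 / K * r ^ l := by
        rw [hV l, hA, hε2]
        have hsplit : ((2:ℝ) ^ (-(l:ℝ))) ^ β
            = ((2:ℝ) ^ (-(l:ℝ))) ^ ((β + γ)/2) * ((2:ℝ) ^ (-(l:ℝ))) ^ d := by
          rw [← Real.rpow_add (hs l)]; congr 1; rw [hd]; ring
        rw [hsplit, hrl l]
        have hx : ((2:ℝ) ^ (-(l:ℝ))) ^ ((β + γ)/2) ≠ 0 :=
          (Real.rpow_pos_of_pos (hs l) _).ne'
        field_simp
      linarith [step1, step2.le]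
    calc ∑ l ∈ range (L+1), V l / (N l : ℝ)
        ≤ ∑ l ∈ range (L+1), cV * ε ^ 2 / K * r ^ l := sum_le_sum hterm
      _ = cV * ε ^ 2 / K * ∑ l ∈ range (L+1), r ^ l := (mul_sum _ _ _).symm
      _ = cV * ε ^ 2 / K * K := by rw [← hK']
      _ = cV * ε ^ 2 := by field_simp
  · -- cost
    have hterm : ∀ l ∈ range (L+1), Cc l * (N l : ℝ)
        ≤ cC * ε ^ (-2:ℝ) * K * r ^ l + cC * t ^ l := by
      intro l _
      have hCl : 0 ≤ Cc l := by
        rw [hC l]; have := Real.rpow_pos_of_pos (hs l) (-γ); positivity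
      have step1 : Cc l * (N l : ℝ) ≤ Cc l * (A l + 1) :=
        mul_le_mul_of_nonneg_left (hNA1 l) hCl
      have step2 : Cc l * (A l + 1) = cC * ε ^ (-2:ℝ) * K * r ^ l + cC * t ^ l := by
        rw [hC l, hA]
        have hcomb : ((2:ℝ) ^ (-(l:ℝ))) ^ (-γ) * ((2:ℝ) ^ (-(l:ℝ))) ^ ((β + γ)/2)
            = r ^ l := by
          rw [← Real.rpow_add (hs l)]
          have : -γ + (β + γ)/2 = d := by rw [hd]; ring
          rw [this, hrl l]
        calc cC * ((2:ℝ) ^ (-(l:ℝ))) ^ (-γ)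
              * (ε ^ (-2:ℝ) * ((2:ℝ) ^ (-(l:ℝ))) ^ ((β + γ)/2) * K + 1)
            = cC * ε ^ (-2:ℝ) * K
                * (((2:ℝ) ^ (-(l:ℝ))) ^ (-γ) * ((2:ℝ) ^ (-(l:ℝ))) ^ ((β + γ)/2))
              + cC * ((2:ℝ) ^ (-(l:ℝ))) ^ (-γ) := by ring
          _ = cC * ε ^ (-2:ℝ) * K * r ^ l + cC * t ^ l := by rw [hcomb, htl l]
      linarith [step1, step2.le]
    have hgeo : ∑ l ∈ range (L+1), t ^ l ≤ t / (t - 1) * ε ^ (-2:ℝ) := by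
      rw [geom_sum_eq (by linarith : t ≠ 1)]
      have htL : t ^ L ≤ ε ^ (-2:ℝ) := by
        have : t ^ L = (2:ℝ) ^ ((L:ℝ) * γ) := by
          rw [ht, ← Real.rpow_natCast ((2:ℝ) ^ γ) L, ← Real.rpow_mul h2.le]; ring_nf
        rw [this]; exact hεL
      have h1 : t ^ (L+1) - 1 ≤ t * ε ^ (-2:ℝ) := by
        have : t ^ (L+1) = t * t ^ L := by rw [pow_succ]; ring
        nlinarith
      calc (t ^ (L+1) - 1) / (t - 1) ≤ t * ε ^ (-2:ℝ) / (t - 1) := by gcongr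
        _ = t / (t - 1) * ε ^ (-2:ℝ) := by ring
    calc ∑ l ∈ range (L+1), Cc l * (N l : ℝ)
        ≤ ∑ l ∈ range (L+1), (cC * ε ^ (-2:ℝ) * K * r ^ l + cC * t ^ l) := sum_le_sum hterm
      _ = cC * ε ^ (-2:ℝ) * K * (∑ l ∈ range (L+1), r ^ l)
          + cC * ∑ l ∈ range (L+1), t ^ l := by rw [sum_add_distrib, mul_sum, mul_sum]
      _ = cC * ε ^ (-2:ℝ) * K * K + cC * ∑ l ∈ range (L+1), t ^ l := by rw [← hK']
      _ ≤ cC * ε ^ (-2:ℝ) * M * M + cC * (t / (t - 1) * ε ^ (-2:ℝ)) := by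
          have h1 : cC * ε ^ (-2:ℝ) * K * K ≤ cC * ε ^ (-2:ℝ) * M * M := by
            have hc : 0 ≤ cC * ε ^ (-2:ℝ) := by positivity
            have hKK : K * K ≤ M * M := mul_le_mul hKM hKM hK0.le hM0.le
            nlinarith [mul_le_mul_of_nonneg_left hKK hc]
          have h2' : cC * ∑ l ∈ range (L+1), t ^ l ≤ cC * (t / (t - 1) * ε ^ (-2:ℝ)) :=
            mul_le_mul_of_nonneg_left hgeo hcC.le
          linarith
      _ = (cC * M ^ 2 + cC * t / (t - 1)) * ε ^ (-2:ℝ) := by ring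
end

section
/- (MLMC cost in the worst case β < γ.) Suppose V_l ≤ c_V h_l^β and C_l ≤ c_C h_l^{-γ} with h_l = 2^{-l}, 0 < β < γ, and the bias at level L is at most c_B h_L^α with h_L ∝ ε^{1/α}. Choosing N_l = ⌈ε^{-2} h_l^{(β+γ)/2} h_L^{(β−γ)/2}⌉, the total variance Σ_{l=0}^L V_l N_l^{-1} is O(ε²) and the total cost Σ_{l=0}^L C_l N_l is O(ε^{-(γ/α + 2 − β/α)}). -/
open Finset

private lemma geom_bound (r : ℝ) (hr : 1 < r) (n : ℕ) :
    ∑ l ∈ Finset.range (n+1), r^l ≤ r/(r-1) * r^n := by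
  have h1 : (0:ℝ) < r - 1 := by linarith
  rw [geom_sum_eq (by linarith : r ≠ 1)]
  have h2 : r^(n+1) - 1 ≤ r^(n+1) := by linarith
  calc (r^(n+1) - 1)/(r-1) ≤ r^(n+1)/(r-1) := by gcongr
    _ = r/(r-1) * r^n := by rw [pow_succ]; ring

private lemma rpow_swap (a : ℝ) (l : ℕ) :
    ((2:ℝ) ^ (-(l:ℝ))) ^ a = ((2:ℝ) ^ (-a)) ^ l := by
  rw [← Real.rpow_natCast ((2:ℝ)^(-a)) l, ← Real.rpow_mul (by norm_num),
    ← Real.rpow_mul (by norm_num)]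
  ring_nf

/-- MLMC cost in the worst case `β < γ`: with `V_l ≤ c_V h_l^β`, `C_l ≤ c_C h_l^{-γ}`,
`h_l = 2^{-l}`, bias at level `L` at most `c_B h_L^α`, `h_L ∝ ε^{1/α}`, and
`N_l = ⌈ε^{-2} h_l^{(β+γ)/2} h_L^{(β−γ)/2}⌉`, the total variance is `O(ε²)` and the
total cost is `O(ε^{-(γ/α + 2 − β/α)})`. -/
theorem stmt19 (α β γ cV cC cB : ℝ) (hα : 0 < α) (hβ : 0 < β) (hβγ : β < γ)
    (hβα : β ≤ 2 * α) (hcV : 0 < cV) (hcC : 0 < cC) (hcB : 0 < cB) :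
    ∃ c₁ c₂ : ℝ, 0 < c₁ ∧ 0 < c₂ ∧
    ∀ (ε : ℝ) (L : ℕ), 0 < ε → ε ≤ 1 →
      ε ^ (1 / α) / 2 ≤ (2:ℝ) ^ (-(L:ℝ)) →
      ∀ (V Cc : ℕ → ℝ) (N : ℕ → ℕ) (B : ℝ),
      (∀ l, 0 ≤ V l) →
      (∀ l, V l ≤ cV * ((2:ℝ) ^ (-(l:ℝ))) ^ β) →
      (∀ l, 0 ≤ Cc l) →
      (∀ l, Cc l ≤ cC * ((2:ℝ) ^ (-(l:ℝ))) ^ (-γ)) →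
      |B| ≤ cB * ((2:ℝ) ^ (-(L:ℝ))) ^ α →
      (∀ l, N l = ⌈ε ^ (-2:ℝ) * ((2:ℝ) ^ (-(l:ℝ))) ^ ((β + γ) / 2)
          * ((2:ℝ) ^ (-(L:ℝ))) ^ ((β - γ) / 2)⌉₊) →
      (∑ l ∈ Finset.range (L+1), V l / (N l : ℝ)) ≤ c₁ * ε ^ 2 ∧
      (∑ l ∈ Finset.range (L+1), Cc l * (N l : ℝ))
        ≤ c₂ * ε ^ (-(γ / α + 2 - β / α)) := by
  have h2 : (0:ℝ) < 2 := by norm_num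
  have hγ : 0 < γ := hβ.trans hβγ
  set r : ℝ := (2:ℝ) ^ ((γ - β)/2) with hr_def
  set s : ℝ := (2:ℝ) ^ γ with hs_def
  have hr1 : 1 < r := by
    rw [hr_def, Real.one_lt_rpow_iff_of_pos h2]
    exact Or.inl ⟨by norm_num, by linarith⟩
  have hs1 : 1 < s := by
    rw [hs_def, Real.one_lt_rpow_iff_of_pos h2]
    exact Or.inl ⟨by norm_num, hγ⟩
  have hrpos : (0:ℝ) < r/(r-1) := div_pos (by linarith) (by linarith)
  have hspos : (0:ℝ) < s/(s-1) := div_pos (by linarith) (by linarith)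
  have h2p : ∀ a : ℝ, (0:ℝ) < (2:ℝ) ^ a := fun a => Real.rpow_pos_of_pos h2 a
  refine ⟨cV * (r/(r-1)),
    cC * (r/(r-1)) * (2:ℝ)^(γ-β) + cC * (s/(s-1)) * (2:ℝ)^γ,
    mul_pos hcV hrpos,
    by positivity, ?_⟩
  intro ε L hε hε1 hXL V Cc N B hV0 hVb hC0 hCb hB hN
  set X : ℝ := (2:ℝ) ^ (-(L:ℝ)) with hX_def
  have hXpos : 0 < X := h2p _
  set E : ℕ → ℝ := fun l =>
    ε ^ (-2:ℝ) * ((2:ℝ) ^ (-(l:ℝ))) ^ ((β + γ) / 2) * X ^ ((β - γ) / 2) with hE_def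
  have hEpos : ∀ l, 0 < E l := fun l => by
    have := h2p (-(l:ℝ))
    positivity
  have hNge : ∀ l, E l ≤ (N l : ℝ) := fun l => by
    rw [hN l]; exact Nat.le_ceil _
  have hNle : ∀ l, (N l : ℝ) ≤ E l + 1 := fun l => by
    rw [hN l]; exact (Nat.ceil_lt_add_one (hEpos l).le).le
  have hNpos : ∀ l, 0 < (N l : ℝ) := fun l => (hEpos l).trans_le (hNge l)
  -- key pow identities
  have hxl : ∀ l : ℕ, ((2:ℝ) ^ (-(l:ℝ))) ^ ((β - γ)/2) = r ^ l := fun l => by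
    rw [rpow_swap, hr_def]; ring_nf
  have hxg : ∀ l : ℕ, ((2:ℝ) ^ (-(l:ℝ))) ^ (-γ) = s ^ l := fun l => by
    rw [rpow_swap, hs_def]; ring_nf
  have hrL : r ^ L = X ^ ((β - γ)/2) := (hxl L).symm
  have he2 : ε ^ (2:ℕ) * ε ^ (-2:ℝ) = 1 := by
    rw [← Real.rpow_natCast ε 2, ← Real.rpow_add hε]; norm_num
  have hXcancel : X ^ ((γ - β)/2) * X ^ ((β - γ)/2) = 1 := by
    rw [← Real.rpow_add hXpos, show (γ - β)/2 + (β - γ)/2 = 0 by ring, Real.rpow_zero]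
  -- variance per-term bound
  have hvar : ∀ l, V l / (N l : ℝ) ≤ cV * ε^2 * X ^ ((γ-β)/2) * r ^ l := by
    intro l
    have hx := h2p (-(l:ℝ))
    have h1 : V l / (N l : ℝ) ≤ (cV * ((2:ℝ) ^ (-(l:ℝ))) ^ β) / E l :=
      div_le_div₀ (by positivity) (hVb l) (hEpos l) (hNge l)
    refine h1.trans_eq ?_
    rw [div_eq_iff (hEpos l).ne']
    symm
    have hxadd : ((2:ℝ) ^ (-(l:ℝ))) ^ ((β-γ)/2) * ((2:ℝ) ^ (-(l:ℝ))) ^ ((β+γ)/2)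
        = ((2:ℝ) ^ (-(l:ℝ))) ^ β := by
      rw [← Real.rpow_add hx]; ring_nf
    calc cV * ε^2 * X ^ ((γ-β)/2) * r ^ l * E l
        = cV * (ε^2 * ε^(-2:ℝ)) * (X ^ ((γ-β)/2) * X ^ ((β-γ)/2))
          * (((2:ℝ) ^ (-(l:ℝ))) ^ ((β-γ)/2) * ((2:ℝ) ^ (-(l:ℝ))) ^ ((β+γ)/2)) := by
          rw [hE_def, ← hxl l]; ring
      _ = cV * ((2:ℝ) ^ (-(l:ℝ))) ^ β := by rw [hxadd, hXcancel, he2]; ring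
  constructor
  · -- variance sum
    calc (∑ l ∈ Finset.range (L+1), V l / (N l : ℝ))
        ≤ ∑ l ∈ Finset.range (L+1), cV * ε^2 * X ^ ((γ-β)/2) * r ^ l :=
          Finset.sum_le_sum fun l _ => hvar l
      _ = cV * ε^2 * X ^ ((γ-β)/2) * ∑ l ∈ Finset.range (L+1), r ^ l := by
          rw [Finset.mul_sum]
      _ ≤ cV * ε^2 * X ^ ((γ-β)/2) * (r/(r-1) * r ^ L) := by
          have h0 : 0 ≤ cV * ε^2 * X ^ ((γ-β)/2) := by positivity
          exact mul_le_mul_of_nonneg_left (geom_bound r hr1 L) h0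
      _ = cV * (r/(r-1)) * ε^2 * (X ^ ((γ-β)/2) * X ^ ((β-γ)/2)) := by
          rw [hrL]; ring
      _ = cV * (r/(r-1)) * ε^2 := by rw [hXcancel]; ring
  · -- cost sum
    have hcost : ∀ l, Cc l * (N l : ℝ)
        ≤ cC * ε^(-2:ℝ) * X ^ ((β-γ)/2) * r ^ l + cC * s ^ l := by
      intro l
      have hx := h2p (-(l:ℝ))
      have h1 : Cc l * (N l : ℝ) ≤ (cC * ((2:ℝ) ^ (-(l:ℝ))) ^ (-γ)) * (E l + 1) := by
        apply mul_le_mul (hCb l) (hNle l) (hNpos l).le (by positivity)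
      refine h1.trans_eq ?_
      have hxadd : ((2:ℝ) ^ (-(l:ℝ))) ^ (-γ) * ((2:ℝ) ^ (-(l:ℝ))) ^ ((β+γ)/2)
          = ((2:ℝ) ^ (-(l:ℝ))) ^ ((β-γ)/2) := by
        rw [← Real.rpow_add hx]; ring_nf
      calc (cC * ((2:ℝ) ^ (-(l:ℝ))) ^ (-γ)) * (E l + 1)
          = cC * ε^(-2:ℝ) * X ^ ((β-γ)/2)
            * (((2:ℝ) ^ (-(l:ℝ))) ^ (-γ) * ((2:ℝ) ^ (-(l:ℝ))) ^ ((β+γ)/2))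
            + cC * ((2:ℝ) ^ (-(l:ℝ))) ^ (-γ) := by rw [hE_def]; ring
        _ = cC * ε^(-2:ℝ) * X ^ ((β-γ)/2) * r ^ l + cC * s ^ l := by
            rw [hxadd, hxl l, hxg l]
    have hsL : s ^ L = X ^ (-γ) := (hxg L).symm
    have hXbg : X ^ ((β-γ)/2) * r ^ L = X ^ (β - γ) := by
      rw [hrL, ← Real.rpow_add hXpos]; ring_nf
    -- ε-power bounds
    have hYpos : (0:ℝ) < ε ^ (1/α) / 2 := by positivity
    have hεα : (0:ℝ) < ε ^ (1/α) := Real.rpow_pos_of_pos hε _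
    have hkey : ∀ z : ℝ, z ≤ 0 → X ^ z ≤ ε ^ (z/α) * (2:ℝ) ^ (-z) := by
      intro z hz
      calc X ^ z ≤ (ε ^ (1/α) / 2) ^ z := Real.rpow_le_rpow_of_nonpos hYpos hXL hz
        _ = ε ^ (z/α) * (2:ℝ) ^ (-z) := by
            rw [Real.div_rpow hεα.le h2.le, ← Real.rpow_mul hε.le,
              Real.rpow_neg h2.le, div_eq_mul_inv]
            ring_nf
    set e : ℝ := -(γ / α + 2 - β / α) with he_def
    have hepow : 0 < ε ^ e := Real.rpow_pos_of_pos hε _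
    have hb1 : ε^(-2:ℝ) * X ^ (β - γ) ≤ ε ^ e * (2:ℝ) ^ (γ - β) := by
      have := hkey (β - γ) (by linarith)
      calc ε^(-2:ℝ) * X ^ (β - γ)
          ≤ ε^(-2:ℝ) * (ε ^ ((β-γ)/α) * (2:ℝ) ^ (-(β-γ))) := by
            apply mul_le_mul_of_nonneg_left this (Real.rpow_pos_of_pos hε _).le
        _ = ε^(-2:ℝ) * ε ^ ((β-γ)/α) * (2:ℝ) ^ (γ - β) := by ring_nf
        _ = ε ^ e * (2:ℝ) ^ (γ - β) := by
            rw [← Real.rpow_add hε, he_def]; ring_nf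
    have hb2 : X ^ (-γ) ≤ ε ^ e * (2:ℝ) ^ γ := by
      have h1 := hkey (-γ) (by linarith)
      have h2' : ε ^ (-γ/α) ≤ ε ^ e := by
        apply Real.rpow_le_rpow_of_exponent_ge hε hε1
        rw [he_def, neg_div]
        have : β / α ≤ 2 := by
          rw [div_le_iff₀ hα]; linarith
        linarith
      calc X ^ (-γ) ≤ ε ^ (-γ/α) * (2:ℝ) ^ (-(-γ)) := h1
        _ ≤ ε ^ e * (2:ℝ) ^ γ := by
            rw [neg_neg]
            exact mul_le_mul_of_nonneg_right h2' (h2p γ).le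
    calc (∑ l ∈ Finset.range (L+1), Cc l * (N l : ℝ))
        ≤ ∑ l ∈ Finset.range (L+1),
            (cC * ε^(-2:ℝ) * X ^ ((β-γ)/2) * r ^ l + cC * s ^ l) :=
          Finset.sum_le_sum fun l _ => hcost l
      _ = cC * ε^(-2:ℝ) * X ^ ((β-γ)/2) * (∑ l ∈ Finset.range (L+1), r ^ l)
          + cC * (∑ l ∈ Finset.range (L+1), s ^ l) := by
          rw [Finset.sum_add_distrib, Finset.mul_sum, Finset.mul_sum]
      _ ≤ cC * ε^(-2:ℝ) * X ^ ((β-γ)/2) * (r/(r-1) * r ^ L)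
          + cC * (s/(s-1) * s ^ L) := by
          have h0 : 0 ≤ cC * ε^(-2:ℝ) * X ^ ((β-γ)/2) := by positivity
          gcongr
          · exact geom_bound r hr1 L
          · exact geom_bound s hs1 L
      _ = cC * (r/(r-1)) * (ε^(-2:ℝ) * (X ^ ((β-γ)/2) * r ^ L))
          + cC * (s/(s-1)) * s ^ L := by ring
      _ = cC * (r/(r-1)) * (ε^(-2:ℝ) * X ^ (β-γ))
          + cC * (s/(s-1)) * X ^ (-γ) := by rw [hXbg, hsL]
      _ ≤ cC * (r/(r-1)) * (ε ^ e * (2:ℝ) ^ (γ-β))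
          + cC * (s/(s-1)) * (ε ^ e * (2:ℝ) ^ γ) := by
          gcongr
      _ = (cC * (r/(r-1)) * (2:ℝ)^(γ-β) + cC * (s/(s-1)) * (2:ℝ)^γ) * ε ^ e := by
          ring
end
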